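/- arXiv:2309.06889 — 5 statements merged into one kernel-verified Lean document; each statement's English description precedes it below -/
import Mathlib

section
/- In a classical (non-relativistic) spacetime with degenerate temporal metric t_a and spatial metric h^{ab} satisfying t_a h^{ab} = 0, any connection compatible with both metrics fails to be unique: if ∇ is compatible then so is ∇' = (∇, h^{an} t_{(b} κ_{c)n}) for any antisymmetric tensor κ_{ab}. -/
open scoped BigOperators

/-- Index type for a 4-dimensional manifold (in a global coordinate chart). -/
abbrev Ix : Type := Fin 4
/-- Points of the manifold, identified with ℝ⁴ via a global chart. -/
abbrev Pt : Type := Ix → ℝ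
/-- Scalar fields. -/
abbrev Sca : Type := Pt → ℝ
/-- Vector fields ξ^a (components). -/
abbrev Vec : Type := Pt → Ix → ℝ
/-- One-form fields t_a (components). -/
abbrev Cov : Type := Pt → Ix → ℝ
/-- Rank-2 tensor fields (components). -/
abbrev Ten2 : Type := Pt → Ix → Ix → ℝ
/-- Rank-3 tensor fields (components). -/
abbrev Ten3 : Type := Pt → Ix → Ix → Ix → ℝ
/-- Affine connections, given by Christoffel symbols Γ^a_{bc} = Γ p a b c
(first lower index `b` is the derivative index). -/
abbrev Conn : Type := Pt → Ix → Ix → Ix → ℝ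

/-- Partial (coordinate) derivative ∂_i. -/
noncomputable def pd (i : Ix) (f : Sca) : Sca := fun p => fderiv ℝ f p (Pi.single i (1 : ℝ))

/-- Covariant derivative of a vector field: (covV Γ ξ) p a b = ∇_b ξ^a = ∂_b ξ^a + Γ^a_{bn} ξ^n. -/
noncomputable def covV (Γ : Conn) (ξ : Vec) : Pt → Ix → Ix → ℝ :=
  fun p a b => pd b (fun q => ξ q a) p + ∑ n, Γ p a b n * ξ p n

/-- Covariant derivative of a one-form: (covC Γ t) p a b = ∇_a t_b = ∂_a t_b − Γ^n_{ab} t_n. -/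
noncomputable def covC (Γ : Conn) (t : Cov) : Ten2 :=
  fun p a b => pd a (fun q => t q b) p - ∑ n, Γ p n a b * t p n

/-- Covariant derivative of a (2,0)-tensor: ∇_a h^{bc}. -/
noncomputable def covT20 (Γ : Conn) (h : Ten2) : Ten3 :=
  fun p a b c => pd a (fun q => h q b c) p + ∑ n, Γ p b a n * h p n c + ∑ n, Γ p c a n * h p b n

/-- Covariant derivative of a (0,2)-tensor: ∇_a g_{bc}. -/
noncomputable def covT02 (Γ : Conn) (g : Ten2) : Ten3 :=
  fun p a b c => pd a (fun q => g q b c) p - ∑ n, Γ p n a b * g p n c - ∑ n, Γ p n a c * g p b n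

/-- Torsion tensor T^a_{bc} of a connection, with the sign convention
2∇_[b ∇_c] α = T^n_{bc} ∇_n α for scalar fields α. -/
def torsion (Γ : Conn) : Conn := fun p a b c => Γ p a c b - Γ p a b c

/-- Riemann curvature tensor R^a_{bcd} of a connection. -/
noncomputable def riem (Γ : Conn) : Pt → Ix → Ix → Ix → Ix → ℝ :=
  fun p a b c d => pd c (fun q => Γ q a d b) p - pd d (fun q => Γ q a c b) p
    + ∑ n, Γ p a c n * Γ p n d b - ∑ n, Γ p a d n * Γ p n c b

/-- Ricci tensor R_{bd} of a connection. -/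
noncomputable def ricci (Γ : Conn) : Ten2 := fun p b d => ∑ a, riem Γ p a b a d

/-- A connection is torsion-free if its torsion tensor vanishes. -/
def TorsionFree (Γ : Conn) : Prop := ∀ p a b c, torsion Γ p a b c = 0

/-- A one-form is closed: antisymmetrized partial derivatives vanish. -/
def Closed1Form (t : Cov) : Prop := ∀ p a b, pd a (fun q => t q b) p = pd b (fun q => t q a) p

/-- A classical (non-relativistic, Leibnizian) spacetime: a degenerate temporal
metric t_a and spatial metric h^{ab} on M = ℝ⁴, mutually orthogonal, with t_a
nowhere vanishing and closed, h^{ab} symmetric, positive semi-definite, of rank 3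
with kernel spanned by t_a. -/
structure ClassicalSpacetime where
  t : Cov
  h : Ten2
  smooth_t : ContDiff ℝ (⊤ : ℕ∞) t
  smooth_h : ContDiff ℝ (⊤ : ℕ∞) h
  t_ne : ∀ p, t p ≠ 0
  t_closed : Closed1Form t
  h_symm : ∀ p a b, h p a b = h p b a
  orth : ∀ p b, ∑ a, t p a * h p a b = 0
  h_psd : ∀ p (v : Ix → ℝ), 0 ≤ ∑ a, ∑ b, h p a b * v a * v b
  h_ker : ∀ p (ω : Ix → ℝ), (∀ a, ∑ b, h p a b * ω b = 0) ↔ ∃ c : ℝ, ω = c • t p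

/-- ∇ is compatible with both classical metrics: ∇_a t_b = 0 and ∇_a h^{bc} = 0. -/
def MetricCompatible (S : ClassicalSpacetime) (Γ : Conn) : Prop :=
  (∀ p a b, covC Γ S.t p a b = 0) ∧ (∀ p a b c, covT20 Γ S.h p a b c = 0)

/-- A smooth unit timelike vector field: t_n ξ^n = 1. -/
def UnitTimelike (S : ClassicalSpacetime) (ξ : Vec) : Prop :=
  ContDiff ℝ (⊤ : ℕ∞) ξ ∧ ∀ p, ∑ n, S.t p n * ξ p n = 1

/-- A spacelike vector field: t_n σ^n = 0. -/
def Spacelike (S : ClassicalSpacetime) (σ : Vec) : Prop := ∀ p, ∑ n, S.t p n * σ p n = 0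

/-- ĥ_{ab} is the spatial projector relative to the unit timelike field ξ^a:
ĥ symmetric, ĥ_{an} ξ^n = 0 and h^{an} ĥ_{nb} = δ^a_b − t_b ξ^a. -/
def IsProjector (S : ClassicalSpacetime) (ξ : Vec) (hh : Ten2) : Prop :=
  (∀ p a b, hh p a b = hh p b a) ∧ (∀ p a, ∑ n, hh p a n * ξ p n = 0) ∧
  (∀ p a b, ∑ n, S.h p a n * hh p n b = (if a = b then (1:ℝ) else 0) - S.t p b * ξ p a)

/-- The mixed projector ĥ^i_j = δ^i_j − t_j ξ^i relative to ξ^a. -/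
def proj (S : ClassicalSpacetime) (ξ : Vec) : Pt → Ix → Ix → ℝ :=
  fun p i j => (if i = j then (1:ℝ) else 0) - S.t p j * ξ p i

/-- The rotation-type map determined by a connection:
(rotOf S Γ ξ) p a b = ∇^[a ξ^{b]} = (1/2)(h^{na} ∇_n ξ^b − h^{nb} ∇_n ξ^a). -/
noncomputable def rotOf (S : ClassicalSpacetime) (Γ : Conn) (ξ : Vec) : Ten2 :=
  fun p a b => (1/2) * (∑ n, S.h p n a * covV Γ ξ p b n - ∑ n, S.h p n b * covV Γ ξ p a n)

/-- In a classical spacetime, a compatible connection is never unique: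
if ∇ is compatible with t_a and h^{ab}, then so is ∇' = (∇, h^{an} t_{(b} κ_{c)n})
for any antisymmetric tensor κ_{ab}. -/
theorem compatible_connection_not_unique (S : ClassicalSpacetime) (Γ : Conn) (κ : Ten2)
    (hΓ : MetricCompatible S Γ) (hκ : ∀ p a b, κ p a b = - κ p b a) :
    MetricCompatible S (fun p a b c =>
      Γ p a b c + ∑ n, S.h p a n * ((1/2) * (S.t p b * κ p c n + S.t p c * κ p b n))) := by
  have th0 : ∀ p m, ∑ n, S.h p n m * S.t p n = 0 := by
    intro p m
    have := S.orth p m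
    rw [← this]
    exact Finset.sum_congr rfl (fun n _ => mul_comm _ _)
  constructor
  · intro p a b
    have h1 := hΓ.1 p a b
    simp only [covC] at h1 ⊢
    rw [← h1]
    congr 1
    have : ∑ n, (Γ p n a b + ∑ m, S.h p n m * ((1/2) * (S.t p a * κ p b m + S.t p b * κ p a m)))
        * S.t p n = ∑ n, Γ p n a b * S.t p n
        + ∑ n, (∑ m, S.h p n m * ((1/2) * (S.t p a * κ p b m + S.t p b * κ p a m))) * S.t p n := by
      rw [← Finset.sum_add_distrib]
      exact Finset.sum_congr rfl (fun n _ => by ring)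
    rw [this]
    have hz : ∑ n, (∑ m, S.h p n m * ((1/2) * (S.t p a * κ p b m + S.t p b * κ p a m)))
        * S.t p n = 0 := by
      have : ∀ n, (∑ m, S.h p n m * ((1/2) * (S.t p a * κ p b m + S.t p b * κ p a m)))
          * S.t p n = ∑ m, ((1/2) * (S.t p a * κ p b m + S.t p b * κ p a m))
            * (S.h p n m * S.t p n) := by
        intro n
        rw [Finset.sum_mul]
        exact Finset.sum_congr rfl (fun m _ => by ring)
      simp only [this]
      rw [Finset.sum_comm]
      apply Finset.sum_eq_zero
      intro m _
      rw [← Finset.mul_sum]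
      have : ∑ n, S.h p n m * S.t p n = 0 := th0 p m
      rw [this, mul_zero]
    rw [hz, add_zero]
  · intro p a b c
    have h2 := hΓ.2 p a b c
    simp only [covT20] at h2 ⊢
    have key : ∀ x y : Ix, ∑ n, (∑ m, S.h p x m *
        ((1/2) * (S.t p a * κ p n m + S.t p n * κ p a m))) * S.h p n y
        = (1/2) * S.t p a * ∑ m, ∑ n, S.h p x m * S.h p n y * κ p n m := by
      intro x y
      have step : ∀ n, (∑ m, S.h p x m * ((1/2) * (S.t p a * κ p n m + S.t p n * κ p a m)))
          * S.h p n y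
          = (∑ m, (1/2) * S.t p a * (S.h p x m * S.h p n y * κ p n m))
            + (∑ m, (1/2) * (S.h p x m * κ p a m)) * (S.h p n y * S.t p n) := by
        intro n
        rw [Finset.sum_mul, Finset.sum_mul, ← Finset.sum_add_distrib]
        exact Finset.sum_congr rfl (fun m _ => by ring)
      simp only [step]
      rw [Finset.sum_add_distrib]
      have : ∑ n, (∑ m, (1/2) * (S.h p x m * κ p a m)) * (S.h p n y * S.t p n) = 0 := by
        rw [← Finset.mul_sum, th0 p y, mul_zero]
      rw [this, add_zero, Finset.sum_comm, Finset.mul_sum]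
      exact Finset.sum_congr rfl (fun m _ => by rw [Finset.mul_sum])
    have expand : ∀ (f g : Ix → ℝ), ∑ n, (f n + g n) = ∑ n, f n + ∑ n, g n :=
      fun f g => Finset.sum_add_distrib
    calc pd a (fun q => S.h q b c) p
          + ∑ n, (Γ p b a n + ∑ m, S.h p b m *
              ((1/2) * (S.t p a * κ p n m + S.t p n * κ p a m))) * S.h p n c
          + ∑ n, (Γ p c a n + ∑ m, S.h p c m *
              ((1/2) * (S.t p a * κ p n m + S.t p n * κ p a m))) * S.h p b n
        = (pd a (fun q => S.h q b c) p + ∑ n, Γ p b a n * S.h p n c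
            + ∑ n, Γ p c a n * S.h p b n)
          + ((∑ n, (∑ m, S.h p b m * ((1/2) * (S.t p a * κ p n m + S.t p n * κ p a m)))
              * S.h p n c)
            + (∑ n, (∑ m, S.h p c m * ((1/2) * (S.t p a * κ p n m + S.t p n * κ p a m)))
              * S.h p n b)) := by
          have e1 : ∀ n, (Γ p b a n + ∑ m, S.h p b m *
              ((1/2) * (S.t p a * κ p n m + S.t p n * κ p a m))) * S.h p n c
              = Γ p b a n * S.h p n c + (∑ m, S.h p b m *
              ((1/2) * (S.t p a * κ p n m + S.t p n * κ p a m))) * S.h p n c :=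
            fun n => by ring
          have e2 : ∀ n, (Γ p c a n + ∑ m, S.h p c m *
              ((1/2) * (S.t p a * κ p n m + S.t p n * κ p a m))) * S.h p b n
              = Γ p c a n * S.h p n b + (∑ m, S.h p c m *
              ((1/2) * (S.t p a * κ p n m + S.t p n * κ p a m))) * S.h p n b :=
            fun n => by rw [S.h_symm p b n]; ring
          simp only [e1, e2, Finset.sum_add_distrib]
          have : ∑ n, Γ p c a n * S.h p n b = ∑ n, Γ p c a n * S.h p b n :=
            Finset.sum_congr rfl (fun n _ => by rw [S.h_symm p n b])
          rw [this]
          ring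
      _ = 0 := by
          rw [h2, zero_add, key b c, key c b]
          rw [← mul_add]
          have : (∑ m, ∑ n, S.h p b m * S.h p n c * κ p n m)
              + ∑ m, ∑ n, S.h p c m * S.h p n b * κ p n m = 0 := by
            rw [Finset.sum_comm (f := fun m n => S.h p c m * S.h p n b * κ p n m),
              ← Finset.sum_add_distrib]
            apply Finset.sum_eq_zero; intro m _
            rw [← Finset.sum_add_distrib]
            apply Finset.sum_eq_zero; intro n _
            rw [hκ p n m, S.h_symm p c n, S.h_symm p m b]
            ring
          rw [this, mul_zero]
end

section
/- Let ∇ be a torsion-free, metric-compatible connection on a classical spacetime (M, t_a, h^{ab}). Then the map ↻ sending a smooth vector field ξ^a to ∇^[a ξ^b] := h^{n[a}∇_n ξ^{b]} is a standard of rotation compatible with t_a and h^{ab}. -/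
open scoped BigOperators

/-- h^{n[a} ĥ_{nm} ĥ^{b]}_r ∇'^m σ^r, without antisymmetrization: the projected
spatial derivative h^{na} D_n σ^b of a spacelike vector field σ, computed from ξ,
its projector ĥ, and an auxiliary connection Γ' with ∇'^a h^{bc} = 0. -/
noncomputable def spatialD (S : ClassicalSpacetime) (ξ : Vec) (hh : Ten2) (Γ' : Conn)
    (σ : Vec) : Ten2 :=
  fun p a b => ∑ n, ∑ m, ∑ r,
    S.h p n a * hh p n m * (∑ s, S.h p b s * hh p s r) * (∑ k, S.h p m k * covV Γ' σ p r k)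

/-- Weatherall's notion of a standard of rotation compatible with t_a and h^{ab}:
(1) additivity; (2) Leibniz rule ↻^a(αξ^b) = α ↻^a ξ^b + ξ^[b d^{a]}α;
(3) antisymmetry (commuting with index substitution); (4) if d_a(ξ^n t_n) = 0 then
↻^a ξ^b is spacelike in both indices; (5) on spacelike fields ↻ agrees with the
induced spatial Levi-Civita derivative: ↻^a σ^b = D^[a σ^{b]}. -/
def IsRotationStd (S : ClassicalSpacetime) (R : Vec → Ten2) : Prop :=
  (∀ ξ η : Vec, ContDiff ℝ (⊤ : ℕ∞) ξ → ContDiff ℝ (⊤ : ℕ∞) η → R (ξ + η) = R ξ + R η) ∧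
  (∀ (α : Sca) (ξ : Vec), ContDiff ℝ (⊤ : ℕ∞) α → ContDiff ℝ (⊤ : ℕ∞) ξ → ∀ p a b,
      R (fun q c => α q * ξ q c) p a b
        = α p * R ξ p a b
          + (1/2) * (ξ p b * (∑ n, S.h p a n * pd n α p)
              - ξ p a * (∑ n, S.h p b n * pd n α p))) ∧
  (∀ ξ : Vec, ContDiff ℝ (⊤ : ℕ∞) ξ → ∀ p a b, R ξ p a b = - R ξ p b a) ∧
  (∀ ξ : Vec, ContDiff ℝ (⊤ : ℕ∞) ξ →
      (∀ p a, pd a (fun q => ∑ n, ξ q n * S.t q n) p = 0) →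
      ∀ p b, (∑ n, S.t p n * R ξ p n b = 0) ∧ (∑ n, S.t p n * R ξ p b n = 0)) ∧
  (∀ (ξ : Vec) (hh : Ten2) (Γ' : Conn) (σ : Vec),
      UnitTimelike S ξ → IsProjector S ξ hh → TorsionFree Γ' →
      (∀ p a b c, ∑ n, S.h p a n * covT20 Γ' S.h p n b c = 0) →
      ContDiff ℝ (⊤ : ℕ∞) σ → Spacelike S σ →
      ∀ p a b, R σ p a b
        = (1/2) * (spatialD S ξ hh Γ' σ p a b - spatialD S ξ hh Γ' σ p b a))
section Helpers

lemma pd_add' {f g : Sca} {p : Pt} (hf : DifferentiableAt ℝ f p) (hg : DifferentiableAt ℝ g p)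
    (i : Ix) : pd i (fun q => f q + g q) p = pd i f p + pd i g p := by
  simp [pd, fderiv_fun_add hf hg]

lemma pd_mul' {f g : Sca} {p : Pt} (hf : DifferentiableAt ℝ f p) (hg : DifferentiableAt ℝ g p)
    (i : Ix) : pd i (fun q => f q * g q) p = pd i f p * g p + f p * pd i g p := by
  simp [pd, fderiv_fun_mul hf hg]; ring

lemma pd_sum' {f : Ix → Sca} {p : Pt} (hf : ∀ n, DifferentiableAt ℝ (f n) p) (i : Ix) :
    pd i (fun q => ∑ n, f n q) p = ∑ n, pd i (f n) p := by
  simp [pd, fderiv_fun_sum (fun n _ => hf n)]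

lemma pd_zero_fun {f : Sca} (hf : ∀ q, f q = 0) (i : Ix) (p : Pt) : pd i f p = 0 := by
  have : f = fun _ => 0 := funext hf
  rw [this]; simp [pd]

lemma diff_comp1 {ξ : Pt → Ix → ℝ} (hξ : ContDiff ℝ (⊤ : ℕ∞) ξ) (a : Ix) (p : Pt) :
    DifferentiableAt ℝ (fun q => ξ q a) p :=
  ((contDiff_pi.mp hξ a).differentiable (by simp)).differentiableAt

/-- key identity: for `∇ t = 0`, `∑ t_a ∇_k ξ^a = ∂_k (ξ·t)`. -/
lemma t_covV (S : ClassicalSpacetime) (Γ : Conn) (hct : ∀ p a b, covC Γ S.t p a b = 0)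
    (ξ : Vec) (hξ : ContDiff ℝ (⊤ : ℕ∞) ξ) (p : Pt) (k : Ix) :
    ∑ a, S.t p a * covV Γ ξ p a k = pd k (fun q => ∑ m, ξ q m * S.t q m) p := by
  have hpdt : ∀ m, pd k (fun q => S.t q m) p = ∑ j, Γ p j k m * S.t p j := by
    intro m
    have h0 := hct p k m
    simp only [covC] at h0
    linarith
  have hrhs : pd k (fun q => ∑ m, ξ q m * S.t q m) p
      = ∑ m, (pd k (fun q => ξ q m) p * S.t p m + ξ p m * pd k (fun q => S.t q m) p) := by
    rw [pd_sum' (f := fun m q => ξ q m * S.t q m) (fun m => ((diff_comp1 hξ m p).mul (diff_comp1 S.smooth_t m p))) k]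
    exact Finset.sum_congr rfl fun m _ =>
      pd_mul' (diff_comp1 hξ m p) (diff_comp1 S.smooth_t m p) k
  rw [hrhs]
  have hlhs : ∑ a, S.t p a * covV Γ ξ p a k
      = ∑ a, S.t p a * pd k (fun q => ξ q a) p + ∑ a, ∑ m, S.t p a * (Γ p a k m * ξ p m) := by
    rw [← Finset.sum_add_distrib]
    refine Finset.sum_congr rfl fun a _ => ?_
    simp only [covV, mul_add]
    rw [Finset.mul_sum]
  rw [hlhs]
  have hswap : ∑ a, ∑ m, S.t p a * (Γ p a k m * ξ p m)
      = ∑ m, (∑ j, Γ p j k m * S.t p j) * ξ p m := by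
    rw [Finset.sum_comm]
    refine Finset.sum_congr rfl fun m _ => ?_
    rw [Finset.sum_mul]
    exact Finset.sum_congr rfl fun a _ => by ring
  rw [hswap]
  rw [← Finset.sum_add_distrib]
  refine Finset.sum_congr rfl fun m _ => ?_
  rw [hpdt m]
  ring

end Helpers

/-- If ∇ is a torsion-free connection compatible with the classical
metrics, then the map ξ^a ↦ ∇^[a ξ^{b]} is a standard of rotation compatible with
t_a and h^{ab}. -/
theorem compatible_torsion_free_gives_rotation_standard (S : ClassicalSpacetime)
    (Γ : Conn) (hΓs : ContDiff ℝ (⊤ : ℕ∞) Γ) (htf : TorsionFree Γ)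
    (hcomp : MetricCompatible S Γ) :
    IsRotationStd S (rotOf S Γ) := by
  obtain ⟨hct, hch⟩ := hcomp
  refine ⟨?_, ?_, ?_, ?_, ?_⟩
  · -- additivity
    intro ξ η hξ hη
    funext p a b
    have hcv : ∀ (c n : Ix), covV Γ (ξ + η) p c n = covV Γ ξ p c n + covV Γ η p c n := by
      intro c n
      simp only [covV, Pi.add_apply, pd_add' (diff_comp1 hξ c p) (diff_comp1 hη c p) n]
      rw [show (∑ m, Γ p c n m * (ξ p m + η p m))
          = ∑ m, Γ p c n m * ξ p m + ∑ m, Γ p c n m * η p m from by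
        rw [← Finset.sum_add_distrib]; exact Finset.sum_congr rfl fun m _ => by ring]
      ring
    show rotOf S Γ (ξ + η) p a b = rotOf S Γ ξ p a b + rotOf S Γ η p a b
    simp only [rotOf, hcv]
    rw [show (∑ n, S.h p n a * (covV Γ ξ p b n + covV Γ η p b n))
        = ∑ n, S.h p n a * covV Γ ξ p b n + ∑ n, S.h p n a * covV Γ η p b n from by
        rw [← Finset.sum_add_distrib]; exact Finset.sum_congr rfl fun n _ => by ring,
      show (∑ n, S.h p n b * (covV Γ ξ p a n + covV Γ η p a n))
        = ∑ n, S.h p n b * covV Γ ξ p a n + ∑ n, S.h p n b * covV Γ η p a n from by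
        rw [← Finset.sum_add_distrib]; exact Finset.sum_congr rfl fun n _ => by ring]
    ring
  · -- Leibniz
    intro α ξ hα hξ p a b
    have hcv : ∀ (c n : Ix), covV Γ (fun q d => α q * ξ q d) p c n
        = α p * covV Γ ξ p c n + ξ p c * pd n α p := by
      intro c n
      simp only [covV,
        pd_mul' ((hα.differentiable (by simp)).differentiableAt) (diff_comp1 hξ c p) n]
      rw [show (∑ m, Γ p c n m * (α p * ξ p m)) = α p * ∑ m, Γ p c n m * ξ p m from by
        rw [Finset.mul_sum]; exact Finset.sum_congr rfl fun m _ => by ring]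
      ring
    show rotOf S Γ (fun q d => α q * ξ q d) p a b = _
    simp only [rotOf, hcv]
    have e1 : ∀ c : Ix, (∑ n, S.h p n c * (α p * covV Γ ξ p b n + ξ p b * pd n α p))
        = α p * (∑ n, S.h p n c * covV Γ ξ p b n) + ξ p b * ∑ n, S.h p c n * pd n α p := by
      intro c
      rw [Finset.mul_sum, Finset.mul_sum, ← Finset.sum_add_distrib]
      exact Finset.sum_congr rfl fun n _ => by rw [S.h_symm p c n]; ring
    have e2 : ∀ c : Ix, (∑ n, S.h p n c * (α p * covV Γ ξ p a n + ξ p a * pd n α p))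
        = α p * (∑ n, S.h p n c * covV Γ ξ p a n) + ξ p a * ∑ n, S.h p c n * pd n α p := by
      intro c
      rw [Finset.mul_sum, Finset.mul_sum, ← Finset.sum_add_distrib]
      exact Finset.sum_congr rfl fun n _ => by rw [S.h_symm p c n]; ring
    rw [e1 a, e2 b]
    ring
  · -- antisymmetry
    intro ξ _ p a b
    simp only [rotOf]
    ring
  · -- spacelikeness
    intro ξ hξ hcl p b
    have key : ∑ n, S.t p n * rotOf S Γ ξ p n b = 0 := by
      have h1 : ∑ n, S.t p n * (∑ m, S.h p m n * covV Γ ξ p b m)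
          = ∑ m, (∑ n, S.t p n * S.h p n m) * covV Γ ξ p b m := by
        rw [show (∑ n, S.t p n * (∑ m, S.h p m n * covV Γ ξ p b m))
            = ∑ n, ∑ m, S.t p n * (S.h p m n * covV Γ ξ p b m) from
            Finset.sum_congr rfl fun n _ => by rw [Finset.mul_sum]]
        rw [Finset.sum_comm]
        refine Finset.sum_congr rfl fun m _ => ?_
        rw [Finset.sum_mul]
        exact Finset.sum_congr rfl fun n _ => by rw [S.h_symm p m n]; ring
      have h2 : ∑ n, S.t p n * (∑ m, S.h p m b * covV Γ ξ p n m)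
          = ∑ m, S.h p m b * (∑ n, S.t p n * covV Γ ξ p n m) := by
        rw [show (∑ n, S.t p n * (∑ m, S.h p m b * covV Γ ξ p n m))
            = ∑ n, ∑ m, S.t p n * (S.h p m b * covV Γ ξ p n m) from
            Finset.sum_congr rfl fun n _ => by rw [Finset.mul_sum]]
        rw [Finset.sum_comm]
        refine Finset.sum_congr rfl fun m _ => ?_
        rw [Finset.mul_sum]
        exact Finset.sum_congr rfl fun n _ => by ring
      have h3 : ∀ m, ∑ n, S.t p n * covV Γ ξ p n m = 0 := by
        intro m
        rw [t_covV S Γ hct ξ hξ p m]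
        exact hcl p m
      have expand : ∑ n, S.t p n * rotOf S Γ ξ p n b
          = (1/2) * ((∑ n, S.t p n * (∑ m, S.h p m n * covV Γ ξ p b m))
              - ∑ n, S.t p n * (∑ m, S.h p m b * covV Γ ξ p n m)) := by
        rw [← Finset.sum_sub_distrib, Finset.mul_sum]
        refine Finset.sum_congr rfl fun n _ => ?_
        simp only [rotOf]
        ring
      rw [expand, h1, h2]
      rw [show (∑ m, (∑ n, S.t p n * S.h p n m) * covV Γ ξ p b m) = 0 from
        Finset.sum_eq_zero fun m _ => by rw [S.orth p m, zero_mul]]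
      rw [show (∑ m, S.h p m b * (∑ n, S.t p n * covV Γ ξ p n m)) = 0 from
        Finset.sum_eq_zero fun m _ => by rw [h3 m, mul_zero]]
      ring
    refine ⟨key, ?_⟩
    have hneg : ∑ n, S.t p n * rotOf S Γ ξ p b n
        = ∑ n, -(S.t p n * rotOf S Γ ξ p n b) := by
      refine Finset.sum_congr rfl fun n _ => ?_
      simp only [rotOf]
      ring
    rw [hneg, Finset.sum_neg_distrib, key, neg_zero]
  · -- agreement with the induced spatial derivative on spacelike fields
    intro ξ hh Γ' σ hξut hproj htf' hΓ'h hσs hσsp p a b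
    obtain ⟨hhsym, hhker, hhproj⟩ := hproj
    set C : Ix → Ix → Ix → ℝ := fun r k j => Γ' p r k j - Γ p r k j with hCdef
    have hCsym : ∀ r k j, C r k j = C r j k := by
      intro r k j
      have h1 := htf p r k j
      have h2 := htf' p r k j
      simp only [torsion] at h1 h2
      simp only [hCdef]
      linarith
    set lam : Ix → ℝ := fun c => ∑ r, hh p c r * σ p r with hlam
    have hσh : ∀ n, σ p n = ∑ c, S.h p n c * lam c := by
      intro n
      have e1 : ∑ c, S.h p n c * lam c = ∑ r, (∑ c, S.h p n c * hh p c r) * σ p r := by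
        simp only [hlam]
        rw [show (∑ c, S.h p n c * ∑ r, hh p c r * σ p r)
            = ∑ c, ∑ r, S.h p n c * (hh p c r * σ p r) from
          Finset.sum_congr rfl fun c _ => by rw [Finset.mul_sum]]
        rw [Finset.sum_comm]
        refine Finset.sum_congr rfl fun r _ => ?_
        rw [Finset.sum_mul]
        exact Finset.sum_congr rfl fun c _ => by ring
      rw [e1]
      rw [show (∑ r, (∑ c, S.h p n c * hh p c r) * σ p r)
          = ∑ r, ((if n = r then (1:ℝ) else 0) * σ p r - ξ p n * (S.t p r * σ p r)) from
        Finset.sum_congr rfl fun r _ => by rw [hhproj p n r]; ring]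
      rw [Finset.sum_sub_distrib, ← Finset.mul_sum, hσsp p, mul_zero, sub_zero]
      simp
    set Kf : Ix → Ix → Ix → ℝ :=
      fun d e c => ∑ k, ∑ j, S.h p d k * C e k j * S.h p j c with hKdef
    have hcov' : ∀ n e c, covT20 Γ' S.h p n e c
        = ∑ j, C e n j * S.h p j c + ∑ j, C c n j * S.h p e j := by
      intro n e c
      have h0 := hch p n e c
      simp only [covT20] at h0 ⊢
      have e1 : ∑ j, C e n j * S.h p j c
          = ∑ j, Γ' p e n j * S.h p j c - ∑ j, Γ p e n j * S.h p j c := by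
        rw [← Finset.sum_sub_distrib]
        exact Finset.sum_congr rfl fun j _ => by simp only [hCdef]; ring
      have e2 : ∑ j, C c n j * S.h p e j
          = ∑ j, Γ' p c n j * S.h p e j - ∑ j, Γ p c n j * S.h p e j := by
        rw [← Finset.sum_sub_distrib]
        exact Finset.sum_congr rfl fun j _ => by simp only [hCdef]; ring
      linarith
    have hKanti : ∀ d e c, Kf d e c + Kf d c e = 0 := by
      intro d e c
      have h0 := hΓ'h p d e c
      rw [show (∑ n, S.h p d n * covT20 Γ' S.h p n e c) = Kf d e c + Kf d c e from ?_] at h0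
      · exact h0
      · calc ∑ n, S.h p d n * covT20 Γ' S.h p n e c
            = ∑ n, (∑ j, S.h p d n * C e n j * S.h p j c
                + ∑ j, S.h p d n * C c n j * S.h p j e) := by
              refine Finset.sum_congr rfl fun n _ => ?_
              rw [hcov' n e c, mul_add, Finset.mul_sum, Finset.mul_sum]
              congr 1
              · exact Finset.sum_congr rfl fun j _ => by ring
              · exact Finset.sum_congr rfl fun j _ => by rw [S.h_symm p e j]; ring
          _ = Kf d e c + Kf d c e := by
              rw [Finset.sum_add_distrib]
    have hKsym : ∀ d e c, Kf d e c = Kf c e d := by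
      intro d e c
      simp only [hKdef]
      rw [Finset.sum_comm]
      refine Finset.sum_congr rfl fun j _ => Finset.sum_congr rfl fun k _ => ?_
      rw [S.h_symm p d k, S.h_symm p j c, hCsym e k j]
      ring
    have hK0 : ∀ d e c, Kf d e c = 0 := by
      intro d e c
      linarith [hKsym d e c, hKanti c e d, hKsym c d e, hKanti e d c, hKsym e c d,
        hKanti d c e, hKanti d e c]
    set F : Ix → Ix → ℝ := fun x y => ∑ k, S.h p x k * covV Γ σ p y k with hF
    set E : Ix → Ix → ℝ := fun m r => ∑ k, S.h p m k * covV Γ' σ p r k with hE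
    have hcovV' : ∀ r k, covV Γ' σ p r k = covV Γ σ p r k + ∑ j, C r k j * σ p j := by
      intro r k
      simp only [covV]
      rw [show (∑ j, Γ' p r k j * σ p j)
          = ∑ j, Γ p r k j * σ p j + ∑ j, C r k j * σ p j from by
        rw [← Finset.sum_add_distrib]
        exact Finset.sum_congr rfl fun j _ => by simp only [hCdef]; ring]
      ring
    have hEF : ∀ m r, E m r = F m r := by
      intro m r
      have hΔ : ∑ k, ∑ j, S.h p m k * (C r k j * σ p j) = 0 := by
        have e : ∀ k j : Ix, S.h p m k * (C r k j * σ p j)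
            = ∑ c, S.h p m k * C r k j * S.h p j c * lam c := by
          intro k j
          rw [hσh j]
          simp only [Finset.mul_sum]
          exact Finset.sum_congr rfl fun c _ => by ring
        calc ∑ k, ∑ j, S.h p m k * (C r k j * σ p j)
            = ∑ k, ∑ j, ∑ c, S.h p m k * C r k j * S.h p j c * lam c :=
              Finset.sum_congr rfl fun k _ => Finset.sum_congr rfl fun j _ => e k j
          _ = ∑ c, (∑ k, ∑ j, S.h p m k * C r k j * S.h p j c) * lam c := by
              rw [show (∑ k, ∑ j, ∑ c, S.h p m k * C r k j * S.h p j c * lam c)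
                  = ∑ k, ∑ c, ∑ j, S.h p m k * C r k j * S.h p j c * lam c from
                Finset.sum_congr rfl fun k _ => Finset.sum_comm]
              rw [Finset.sum_comm]
              refine Finset.sum_congr rfl fun c _ => ?_
              rw [Finset.sum_mul]
              refine Finset.sum_congr rfl fun k _ => ?_
              rw [Finset.sum_mul]
          _ = 0 := Finset.sum_eq_zero fun c _ => by
              have := hK0 m r c
              simp only [hKdef] at this
              rw [this, zero_mul]
      have expand : E m r = F m r + ∑ k, ∑ j, S.h p m k * (C r k j * σ p j) := by
        simp only [hE, hF]
        rw [← Finset.sum_add_distrib]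
        refine Finset.sum_congr rfl fun k _ => ?_
        rw [hcovV' r k, mul_add, Finset.mul_sum]
      rw [expand, hΔ, add_zero]
    have htE2 : ∀ m, ∑ r, S.t p r * F m r = 0 := by
      intro m
      simp only [hF]
      calc ∑ r, S.t p r * ∑ k, S.h p m k * covV Γ σ p r k
          = ∑ r, ∑ k, S.t p r * (S.h p m k * covV Γ σ p r k) :=
            Finset.sum_congr rfl fun r _ => by rw [Finset.mul_sum]
        _ = ∑ k, ∑ r, S.t p r * (S.h p m k * covV Γ σ p r k) := Finset.sum_comm
        _ = ∑ k, S.h p m k * ∑ r, S.t p r * covV Γ σ p r k := by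
            refine Finset.sum_congr rfl fun k _ => ?_
            rw [Finset.mul_sum]
            exact Finset.sum_congr rfl fun r _ => by ring
        _ = 0 := by
            refine Finset.sum_eq_zero fun k _ => ?_
            rw [t_covV S Γ hct σ hσs p k, pd_zero_fun (fun q => ?_) k p, mul_zero]
            rw [show (∑ m, σ q m * S.t q m) = ∑ m, S.t q m * σ q m from
              Finset.sum_congr rfl fun m _ => mul_comm _ _]
            exact hσsp q
    have htE1 : ∀ y, ∑ m, S.t p m * F m y = 0 := by
      intro y
      simp only [hF]
      calc ∑ m, S.t p m * ∑ k, S.h p m k * covV Γ σ p y k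
          = ∑ m, ∑ k, S.t p m * S.h p m k * covV Γ σ p y k :=
            Finset.sum_congr rfl fun m _ => by
              rw [Finset.mul_sum]; exact Finset.sum_congr rfl fun k _ => by ring
        _ = ∑ k, (∑ m, S.t p m * S.h p m k) * covV Γ σ p y k := by
            rw [Finset.sum_comm]
            exact Finset.sum_congr rfl fun k _ => by rw [Finset.sum_mul]
        _ = 0 := Finset.sum_eq_zero fun k _ => by rw [S.orth p k, zero_mul]
    have hSD : ∀ (x y : Ix), spatialD S ξ hh Γ' σ p x y = F x y := by
      intro x y
      simp only [spatialD]
      calc (∑ n, ∑ m, ∑ r, S.h p n x * hh p n m * (∑ s, S.h p y s * hh p s r)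
              * (∑ k, S.h p m k * covV Γ' σ p r k))
          = ∑ m, ∑ r, (∑ n, S.h p n x * hh p n m)
              * ((∑ s, S.h p y s * hh p s r) * E m r) := by
            rw [Finset.sum_comm]
            refine Finset.sum_congr rfl fun m _ => ?_
            rw [Finset.sum_comm]
            refine Finset.sum_congr rfl fun r _ => ?_
            rw [Finset.sum_mul]
            refine Finset.sum_congr rfl fun n _ => ?_
            simp only [hE]
            ring
        _ = ∑ m, (∑ n, S.h p n x * hh p n m) * F m y := by
            refine Finset.sum_congr rfl fun m _ => ?_
            rw [← Finset.mul_sum]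
            congr 1
            calc ∑ r, (∑ s, S.h p y s * hh p s r) * E m r
                = ∑ r, ((if y = r then (1:ℝ) else 0) * E m r - ξ p y * (S.t p r * E m r)) :=
                  Finset.sum_congr rfl fun r _ => by rw [hhproj p y r]; ring
              _ = E m y - ξ p y * ∑ r, S.t p r * E m r := by
                  rw [Finset.sum_sub_distrib, ← Finset.mul_sum]
                  congr 1
                  simp
              _ = F m y := by
                  rw [show (∑ r, S.t p r * E m r) = ∑ r, S.t p r * F m r from
                    Finset.sum_congr rfl fun r _ => by rw [hEF m r], htE2 m, hEF m y]
                  ring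
        _ = F x y := by
            rw [show (∑ m, (∑ n, S.h p n x * hh p n m) * F m y)
                = ∑ m, ((if x = m then (1:ℝ) else 0) * F m y - ξ p x * (S.t p m * F m y)) from
              Finset.sum_congr rfl fun m _ => by
                rw [show (∑ n, S.h p n x * hh p n m) = ∑ n, S.h p x n * hh p n m from
                  Finset.sum_congr rfl fun n _ => by rw [S.h_symm p n x], hhproj p x m]
                ring]
            rw [Finset.sum_sub_distrib, ← Finset.mul_sum, htE1 y, mul_zero, sub_zero]
            simp
    show rotOf S Γ σ p a b = _
    simp only [rotOf]
    rw [hSD a b, hSD b a]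
    rw [show (∑ n, S.h p n a * covV Γ σ p b n) = F a b from by
        simp only [hF]; exact Finset.sum_congr rfl fun n _ => by rw [S.h_symm p n a],
      show (∑ n, S.h p n b * covV Γ σ p a n) = F b a from by
        simp only [hF]; exact Finset.sum_congr rfl fun n _ => by rw [S.h_symm p n b]]
end

section
/- Let ∇ be a metric-compatible, possibly torsionful connection on a classical spacetime (M, t_a, h^{ab}) with t_a closed, and let D be the induced spatial derivative operator on each spacelike hypersurface. Then D is torsion-free (i.e., D_[a D_{b]} α = 0 for all scalar fields α) if and only if T^{abc} = 0. -/
open scoped BigOperators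

section AuxLemmas

lemma pd_comm (α : Sca) (hα : ContDiff ℝ (⊤ : ℕ∞) α) (p : Pt) (n m : Ix) :
    pd n (fun q => pd m α q) p = pd m (fun q => pd n α q) p := by
  have hd : DifferentiableAt ℝ (fderiv ℝ α) p :=
    ((hα.fderiv_right (m := 1) (WithTop.coe_le_coe.2 le_top)).differentiable one_ne_zero).differentiableAt
  have key : ∀ i j : Ix, pd i (fun q => pd j α q) p
      = fderiv ℝ (fderiv ℝ α) p (Pi.single i 1) (Pi.single j 1) := by
    intro i j
    have h1 : (fun q => pd j α q) = fun q => (fderiv ℝ α q) (Pi.single j (1:ℝ)) := rfl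
    rw [pd, h1, fderiv_clm_apply hd (differentiableAt_const _)]
    simp
  rw [key, key]
  have hsymm : IsSymmSndFDerivAt ℝ α p := (hα.contDiffAt).isSymmSndFDerivAt (by rw [minSmoothness_of_isRCLikeNormedField]; exact WithTop.coe_le_coe.2 le_top)
  exact hsymm _ _

lemma h_surj (h : Ix → Ix → ℝ) (t : Ix → ℝ) (ht : t ≠ 0)
    (horth : ∀ b, ∑ a, t a * h a b = 0)
    (hker : ∀ ω : Ix → ℝ, (∀ a, ∑ b, h a b * ω b = 0) ↔ ∃ c : ℝ, ω = c • t)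
    (v : Ix → ℝ) (hv : ∑ n, t n * v n = 0) :
    ∃ ω : Ix → ℝ, ∀ a, v a = ∑ b, h a b * ω b := by
  classical
  set A : Matrix Ix Ix ℝ := Matrix.of h with hA
  set f : (Ix → ℝ) →ₗ[ℝ] (Ix → ℝ) := A.mulVecLin with hf
  have hfapp : ∀ ω a, f ω a = ∑ b, h a b * ω b := by
    intro ω a
    simp [hf, hA, Matrix.mulVecLin_apply, Matrix.mulVec, dotProduct]
  set φ : (Ix → ℝ) →ₗ[ℝ] ℝ :=
    { toFun := fun w => ∑ n, t n * w n
      map_add' := by intro x y; simp [mul_add, Finset.sum_add_distrib]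
      map_smul' := by
        intro c x
        simp only [smul_eq_mul, RingHom.id_apply, Finset.mul_sum]
        exact Finset.sum_congr rfl fun i _ => by simp [smul_eq_mul]; ring } with hφ
  have hker' : LinearMap.ker f = Submodule.span ℝ {t} := by
    ext ω
    simp only [LinearMap.mem_ker, Submodule.mem_span_singleton]
    constructor
    · intro h0
      obtain ⟨c, hc⟩ := (hker ω).1 (fun a => by rw [← hfapp, h0]; rfl)
      exact ⟨c, hc.symm⟩
    · rintro ⟨c, rfl⟩
      funext a
      have := (hker (c • t)).2 ⟨c, rfl⟩ a
      rw [← hfapp] at this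
      simpa using this
  have hrange : LinearMap.range f ≤ LinearMap.ker φ := by
    rintro w ⟨ω, rfl⟩
    simp only [LinearMap.mem_ker, hφ, LinearMap.coe_mk, AddHom.coe_mk]
    calc ∑ n, t n * f ω n = ∑ n, ∑ b, t n * (h n b * ω b) := by
          simp [hfapp, Finset.mul_sum]
      _ = ∑ b, (∑ n, t n * h n b) * ω b := by
          rw [Finset.sum_comm]; congr 1; ext b; rw [Finset.sum_mul]; congr 1; ext n; ring
      _ = 0 := by simp [horth]
  have hdim : Module.finrank ℝ (Ix → ℝ) = 4 := by simp
  have hkerdim : Module.finrank ℝ (LinearMap.ker f) = 1 := by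
    rw [hker']; exact finrank_span_singleton ht
  have hrangedim : Module.finrank ℝ (LinearMap.range f) = 3 := by
    have := LinearMap.finrank_range_add_finrank_ker f
    omega
  have hφne : φ ≠ 0 := by
    obtain ⟨n, hn⟩ := Function.ne_iff.1 ht
    intro h0
    apply hn
    have : φ (Pi.single n 1) = 0 := by rw [h0]; rfl
    simpa [hφ, Pi.single_apply, mul_comm] using this
  have hφker : Module.finrank ℝ (LinearMap.ker φ) = 3 := by
    have hr : Module.finrank ℝ (LinearMap.range φ) = 1 := by
      have h1 : Module.finrank ℝ (LinearMap.range φ) ≤ 1 := by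
        simpa using Submodule.finrank_le (LinearMap.range φ)
      have h2 : 0 < Module.finrank ℝ (LinearMap.range φ) := by
        rw [Module.finrank_pos_iff]
        exact Submodule.nontrivial_iff_ne_bot.2 (fun hb => hφne (LinearMap.range_eq_bot.1 hb))
      omega
    have := LinearMap.finrank_range_add_finrank_ker φ
    omega
  have heq : LinearMap.range f = LinearMap.ker φ :=
    Submodule.eq_of_le_of_finrank_eq hrange (by rw [hrangedim, hφker])
  have hvmem : v ∈ LinearMap.range f := by
    rw [heq]; simpa [hφ] using hv
  obtain ⟨ω, hω⟩ := hvmem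
  exact ⟨ω, fun a => by rw [← hfapp, hω]⟩

lemma sum4_swap (f : Ix → Ix → Ix → Ix → ℝ) :
    ∑ n, ∑ m, ∑ s, ∑ u, f n m s u = ∑ s, ∑ u, ∑ n, ∑ m, f n m s u := by
  calc ∑ n, ∑ m, ∑ s, ∑ u, f n m s u
      = ∑ n, ∑ s, ∑ m, ∑ u, f n m s u :=
        Finset.sum_congr rfl fun n _ => Finset.sum_comm
    _ = ∑ s, ∑ n, ∑ m, ∑ u, f n m s u := Finset.sum_comm
    _ = ∑ s, ∑ n, ∑ u, ∑ m, f n m s u :=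
        Finset.sum_congr rfl fun s _ => Finset.sum_congr rfl fun n _ => Finset.sum_comm
    _ = ∑ s, ∑ u, ∑ n, ∑ m, f n m s u :=
        Finset.sum_congr rfl fun s _ => Finset.sum_comm

lemma sum3_swap (f : Ix → Ix → Ix → ℝ) :
    ∑ n, ∑ m, ∑ k, f n m k = ∑ k, ∑ n, ∑ m, f n m k := by
  calc ∑ n, ∑ m, ∑ k, f n m k
      = ∑ n, ∑ k, ∑ m, f n m k := Finset.sum_congr rfl fun n _ => Finset.sum_comm
    _ = ∑ k, ∑ n, ∑ m, f n m k := Finset.sum_comm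

lemma expand2 (P Q : Ix → ℝ) (c d : Ix → ℝ) (E E' : Ix → Ix → ℝ) (T : Ix → Ix → ℝ)
    (hP : ∀ n, P n = ∑ s, c s * E n s) (hQ : ∀ m, Q m = ∑ u, d u * E' m u)
    (hT : ∀ s u, ∑ n, ∑ m, E n s * E' m u * T n m = 0) :
    ∑ n, ∑ m, P n * Q m * T n m = 0 := by
  have step : ∀ n m, P n * Q m * T n m = ∑ s, ∑ u, c s * d u * (E n s * E' m u * T n m) := by
    intro n m
    rw [hP, hQ, Finset.sum_mul_sum, Finset.sum_mul]
    refine Finset.sum_congr rfl fun s _ => ?_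
    rw [Finset.sum_mul]
    exact Finset.sum_congr rfl fun u _ => by ring
  calc ∑ n, ∑ m, P n * Q m * T n m
      = ∑ n, ∑ m, ∑ s, ∑ u, c s * d u * (E n s * E' m u * T n m) :=
        Finset.sum_congr rfl fun n _ => Finset.sum_congr rfl fun m _ => step n m
    _ = ∑ s, ∑ u, ∑ n, ∑ m, c s * d u * (E n s * E' m u * T n m) := sum4_swap _
    _ = ∑ s, ∑ u, c s * d u * (∑ n, ∑ m, E n s * E' m u * T n m) := by
        simp only [Finset.mul_sum]
    _ = 0 := by simp [hT]

lemma antisym_iff (P : Ix → Ix → ℝ) (A : Ix → Ix → ℝ) (a b : Ix) :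
    (∑ n, ∑ m, P n a * P m b * A n m = ∑ n, ∑ m, P n b * P m a * A n m)
    ↔ ∑ n, ∑ m, P n a * P m b * (A n m - A m n) = 0 := by
  have h1 : ∑ n, ∑ m, P n b * P m a * A n m = ∑ n, ∑ m, P n a * P m b * A m n := by
    rw [Finset.sum_comm]
    exact Finset.sum_congr rfl fun n _ => Finset.sum_congr rfl fun m _ => by ring
  have h2 : ∑ n, ∑ m, P n a * P m b * (A n m - A m n)
      = (∑ n, ∑ m, P n a * P m b * A n m) - ∑ n, ∑ m, P n a * P m b * A m n := by
    simp [mul_sub, Finset.sum_sub_distrib]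
  rw [h1, h2, sub_eq_zero]

lemma covC_antisym (Γ : Conn) (α : Sca) (hα : ContDiff ℝ (⊤ : ℕ∞) α) (p : Pt) (n m : Ix) :
    covC Γ (fun q c => pd c α q) p n m - covC Γ (fun q c => pd c α q) p m n
      = ∑ k, torsion Γ p k n m * pd k α p := by
  simp only [covC]
  rw [pd_comm α hα p n m]
  rw [sub_sub_sub_cancel_left, ← Finset.sum_sub_distrib]
  exact Finset.sum_congr rfl fun k _ => by simp only [torsion]; ring

lemma pd_coord (k c : Ix) (p : Pt) : pd k (fun q => q c) p = if c = k then 1 else 0 := by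
  unfold pd
  rw [show (fun q : Pt => q c) = ⇑(ContinuousLinearMap.proj (R := ℝ) (φ := fun _ : Ix => (ℝ : Type)) c) from rfl,
    ContinuousLinearMap.fderiv]
  simp [Pi.single_apply]

end AuxLemmas

/-- For a metric-compatible, possibly torsionful connection ∇ on a
classical spacetime and unit timelike ξ^a, the induced spatial derivative
D_a D_b α = ĥ^n_a ĥ^m_b ∇_n ∇_m α is torsion-free (D_[a D_{b]} α = 0 for all
scalar fields α) iff T^{abc} = 0. -/
theorem spatial_derivative_torsion_free_iff (S : ClassicalSpacetime) (Γ : Conn)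
    (ξ : Vec) (hcomp : MetricCompatible S Γ) (hξ : UnitTimelike S ξ) :
    (∀ α : Sca, ContDiff ℝ (⊤ : ℕ∞) α → ∀ p a b,
        ∑ n, ∑ m, proj S ξ p n a * proj S ξ p m b * covC Γ (fun q c => pd c α q) p n m
          = ∑ n, ∑ m, proj S ξ p n b * proj S ξ p m a * covC Γ (fun q c => pd c α q) p n m) ↔
      (∀ p a b c, ∑ n, ∑ m, S.h p b n * S.h p c m * torsion Γ p a n m = 0) := by
    classical
  -- basic facts about the projector
  have hPspace : ∀ p a, ∑ n, S.t p n * proj S ξ p n a = 0 := by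
    intro p a
    have h1 : ∀ n, S.t p n * proj S ξ p n a
        = (if n = a then S.t p n else 0) - S.t p a * (S.t p n * ξ p n) := by
      intro n; simp only [proj]
      by_cases hna : n = a <;> simp [hna] <;> ring
    simp only [h1, Finset.sum_sub_distrib, Finset.sum_ite_eq', Finset.mem_univ, if_pos]
    rw [← Finset.mul_sum, hξ.2 p]
    ring
  have hrec : ∀ p b n, S.h p b n = ∑ s, S.h p b s * proj S ξ p n s := by
    intro p b n
    have h1 : ∀ s, S.h p b s * proj S ξ p n s
        = (if s = n then S.h p b s else 0) - ξ p n * (S.t p s * S.h p s b) := by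
      intro s; simp only [proj]
      by_cases hsn : s = n
      · subst hsn
        rw [if_pos rfl, if_pos rfl, S.h_symm p s b]
        ring
      · rw [if_neg (fun h => hsn h.symm), if_neg hsn, S.h_symm p s b]
        ring
    simp only [h1, Finset.sum_sub_distrib, Finset.sum_ite_eq', Finset.mem_univ, if_pos]
    rw [← Finset.mul_sum, S.orth p b]
    ring
  constructor
  · -- D torsion-free → spatial torsion vanishes
    intro H p a b c
    -- first: projected torsion vanishes
    have L : ∀ a' b' c', ∑ n, ∑ m,
        proj S ξ p n a' * proj S ξ p m b' * torsion Γ p c' n m = 0 := by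
      intro a' b' c'
      have hco : ContDiff ℝ (⊤ : ℕ∞) (fun q : Pt => q c') :=
        (ContinuousLinearMap.proj (R := ℝ) (φ := fun _ : Ix => (ℝ : Type)) c').contDiff
      have h0 := (antisym_iff (proj S ξ p)
        (fun n m => covC Γ (fun q d => pd d (fun q' : Pt => q' c') q) p n m) a' b').1
        (H (fun q : Pt => q c') hco p a' b')
      calc ∑ n, ∑ m, proj S ξ p n a' * proj S ξ p m b' * torsion Γ p c' n m
          = ∑ n, ∑ m, proj S ξ p n a' * proj S ξ p m b' *
              (covC Γ (fun q d => pd d (fun q' : Pt => q' c') q) p n m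
                - covC Γ (fun q d => pd d (fun q' : Pt => q' c') q) p m n) := by
            refine Finset.sum_congr rfl fun n _ => Finset.sum_congr rfl fun m _ => ?_
            rw [covC_antisym Γ _ hco p n m]
            congr 1
            calc torsion Γ p c' n m
                = ∑ k, torsion Γ p k n m * (if c' = k then (1:ℝ) else 0) := by
                  simp [mul_ite, Finset.sum_ite_eq]
              _ = ∑ k, torsion Γ p k n m * pd k (fun q : Pt => q c') p := by
                  exact Finset.sum_congr rfl fun k _ => by rw [pd_coord]
        _ = 0 := h0
    -- now transfer to h-projections
    exact expand2 (fun n => S.h p b n) (fun m => S.h p c m)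
      (fun s => S.h p b s) (fun u => S.h p c u)
      (fun n s => proj S ξ p n s) (fun m u => proj S ξ p m u)
      (fun n m => torsion Γ p a n m)
      (fun n => hrec p b n) (fun m => hrec p c m)
      (fun s u => L s u a)
  · -- spatial torsion vanishes → D torsion-free
    intro H α hα p a b
    rw [antisym_iff (proj S ξ p) (fun n m => covC Γ (fun q c => pd c α q) p n m) a b]
    -- decompose the projected directions via surjectivity of h
    have hsurj : ∀ d : Ix, ∃ ω : Ix → ℝ, ∀ n, proj S ξ p n d = ∑ s, S.h p n s * ω s := by
      intro d
      obtain ⟨ω, hω⟩ := h_surj (S.h p) (S.t p) (S.t_ne p) (S.orth p) (S.h_ker p)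
        (fun n => proj S ξ p n d) (hPspace p d)
      exact ⟨ω, hω⟩
    obtain ⟨ω, hω⟩ := hsurj a
    obtain ⟨ρ, hρ⟩ := hsurj b
    have inner0 : ∀ k, ∑ n, ∑ m,
        proj S ξ p n a * proj S ξ p m b * torsion Γ p k n m = 0 := by
      intro k
      refine expand2 _ _ ω ρ (fun n s => S.h p n s) (fun m u => S.h p m u) _
        (fun n => by rw [hω n]; exact Finset.sum_congr rfl fun s _ => by ring)
        (fun m => by rw [hρ m]; exact Finset.sum_congr rfl fun u _ => by ring)
        (fun s u => ?_)
      calc ∑ n, ∑ m, S.h p n s * S.h p m u * torsion Γ p k n m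
          = ∑ n, ∑ m, S.h p s n * S.h p u m * torsion Γ p k n m := by
            refine Finset.sum_congr rfl fun n _ => Finset.sum_congr rfl fun m _ => ?_
            rw [S.h_symm p n s, S.h_symm p m u]
        _ = 0 := H p k s u
    calc ∑ n, ∑ m, proj S ξ p n a * proj S ξ p m b *
            (covC Γ (fun q c => pd c α q) p n m - covC Γ (fun q c => pd c α q) p m n)
        = ∑ n, ∑ m, ∑ k, pd k α p *
            (proj S ξ p n a * proj S ξ p m b * torsion Γ p k n m) := by
          refine Finset.sum_congr rfl fun n _ => Finset.sum_congr rfl fun m _ => ?_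
          rw [covC_antisym Γ α hα p n m, Finset.mul_sum]
          exact Finset.sum_congr rfl fun k _ => by ring
      _ = ∑ k, ∑ n, ∑ m, pd k α p *
            (proj S ξ p n a * proj S ξ p m b * torsion Γ p k n m) := sum3_swap _
      _ = ∑ k, pd k α p * (∑ n, ∑ m,
            proj S ξ p n a * proj S ξ p m b * torsion Γ p k n m) := by
          simp only [Finset.mul_sum]
      _ = 0 := by simp [inner0]
end

section
/- On a classical spacetime, if a connection ∇ satisfies h^{an} Q_{nb} = 0 where Q_{ab} = ∇_a t_b, then for any smooth vector field η^a with d_a(η^n t_n) = 0 one has t_n h^{m[n} ∇_m η^{a]} = (1/2) h^{ma} η^n Q_{mn} = 0, i.e., ∇^[a η^{b]} is spacelike in both indices. -/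
open scoped BigOperators

lemma pd_prod_sum (η t : Vec) (hη : ContDiff ℝ (⊤ : ℕ∞) η) (ht : ContDiff ℝ (⊤ : ℕ∞) t)
    (p : Pt) (m : Ix) :
    pd m (fun q => ∑ n, η q n * t q n) p
      = ∑ n, (pd m (fun q => η q n) p * t p n + η p n * pd m (fun q => t q n) p) := by
  have hηn : ∀ n : Ix, DifferentiableAt ℝ (fun q => η q n) p := fun n =>
    ((contDiff_pi.mp hη n).differentiable (by simp)).differentiableAt
  have htn : ∀ n : Ix, DifferentiableAt ℝ (fun q => t q n) p := fun n =>
    ((contDiff_pi.mp ht n).differentiable (by simp)).differentiableAt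
  unfold pd
  rw [fderiv_fun_sum (A := fun n q => η q n * t q n) (fun n _ => ((hηn n).mul (htn n)))]
  rw [ContinuousLinearMap.sum_apply]
  refine Finset.sum_congr rfl fun n _ => ?_
  rw [fderiv_fun_mul (hηn n) (htn n)]
  simp only [ContinuousLinearMap.add_apply, ContinuousLinearMap.smul_apply, smul_eq_mul]
  ring

/-- On a classical spacetime, if h^{an} Q_{nb} = 0 (with
Q_{ab} = ∇_a t_b), then for any smooth vector field η^a with d_a(η^n t_n) = 0 we
have t_n h^{m[n} ∇_m η^{a]} = (1/2) h^{ma} η^n Q_{mn} = 0; that is, ∇^[a η^{b]}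
is spacelike in both indices. -/
theorem antisymmetrized_derivative_spacelike (S : ClassicalSpacetime) (Γ : Conn)
    (η : Vec) (hη : ContDiff ℝ (⊤ : ℕ∞) η)
    (hQ : ∀ p a b, ∑ n, S.h p a n * covC Γ S.t p n b = 0)
    (hconst : ∀ p a, pd a (fun q => ∑ n, η q n * S.t q n) p = 0) :
    ∀ p a,
      (∑ n, S.t p n * rotOf S Γ η p n a
          = (1/2) * ∑ m, ∑ n, S.h p m a * η p n * covC Γ S.t p m n) ∧
      (∑ n, S.t p n * rotOf S Γ η p n a = 0) := by
  intro p a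
  have key : ∀ m : Ix, ∑ n, S.t p n * covV Γ η p n m
      = - ∑ n, η p n * covC Γ S.t p m n := by
    intro m
    have hc := hconst p m
    rw [pd_prod_sum η S.t hη S.smooth_t p m] at hc
    simp only [covV, covC, Fin.sum_univ_four] at hc ⊢
    linear_combination hc
  have o : ∀ m : Ix, ∑ n, S.t p n * S.h p m n = 0 := by
    intro m
    calc ∑ n, S.t p n * S.h p m n = ∑ n, S.t p n * S.h p n m :=
          Finset.sum_congr rfl fun n _ => by rw [S.h_symm p m n]
      _ = 0 := S.orth p m
  have hq' : ∀ n : Ix, ∑ m, S.h p m a * covC Γ S.t p m n = 0 := by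
    intro n
    calc ∑ m, S.h p m a * covC Γ S.t p m n = ∑ m, S.h p a m * covC Γ S.t p m n :=
          Finset.sum_congr rfl fun m _ => by rw [S.h_symm p m a]
      _ = 0 := hQ p a n
  have k0 := key 0; have k1 := key 1; have k2 := key 2; have k3 := key 3
  have o0 := o 0; have o1 := o 1; have o2 := o 2; have o3 := o 3
  have q0 := hq' 0; have q1 := hq' 1; have q2 := hq' 2; have q3 := hq' 3
  simp only [Fin.sum_univ_four] at k0 k1 k2 k3 o0 o1 o2 o3 q0 q1 q2 q3
  constructor
  · simp only [rotOf, Fin.sum_univ_four]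
    linear_combination (1/2) * covV Γ η p a 0 * o0 + (1/2) * covV Γ η p a 1 * o1
      + (1/2) * covV Γ η p a 2 * o2 + (1/2) * covV Γ η p a 3 * o3
      - (1/2) * S.h p 0 a * k0 - (1/2) * S.h p 1 a * k1
      - (1/2) * S.h p 2 a * k2 - (1/2) * S.h p 3 a * k3
  · simp only [rotOf, Fin.sum_univ_four]
    linear_combination (1/2) * covV Γ η p a 0 * o0 + (1/2) * covV Γ η p a 1 * o1
      + (1/2) * covV Γ η p a 2 * o2 + (1/2) * covV Γ η p a 3 * o3
      - (1/2) * S.h p 0 a * k0 - (1/2) * S.h p 1 a * k1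
      - (1/2) * S.h p 2 a * k2 - (1/2) * S.h p 3 a * k3
      + (1/2) * η p 0 * q0 + (1/2) * η p 1 * q1 + (1/2) * η p 2 * q2 + (1/2) * η p 3 * q3
end

section
/- On a classical spacetime, for any antisymmetric two-form f_{ab}, the fully raised tensor f^{ab} = h^{an}h^{bm}f_{nm} vanishes if and only if f_{ab} = t_[a φ_{b]} for some covector φ_a. -/
open scoped BigOperators

/-- Contracting an antisymmetric bilinear form with the same vector twice gives zero. -/
lemma anti_quad (f : Ix → Ix → ℝ) (hanti : ∀ a b, f a b = - f b a) (v : Ix → ℝ) :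
    ∑ n, ∑ m, v n * v m * f m n = 0 := by
  have h1 : (∑ n, ∑ m, v n * v m * f m n) = -∑ n, ∑ m, v n * v m * f m n := by
    conv_lhs => rw [Finset.sum_comm]
    rw [← Finset.sum_neg_distrib]
    refine Finset.sum_congr rfl fun n _ => ?_
    rw [← Finset.sum_neg_distrib]
    refine Finset.sum_congr rfl fun m _ => ?_
    rw [hanti]; ring
  linarith

/-- Expansion of a single contraction against the "g" combination. -/
lemma expand1 (v u w : Ix → ℝ) (C : Ix → Ix → ℝ) (b : Ix) :
    ∑ n, v n * (C n b - u n * w b + u b * w n)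
      = (∑ n, v n * C n b) - (∑ n, v n * u n) * w b + u b * (∑ n, v n * w n) := by
  simp only [Fin.sum_univ_four]; ring

/-- Expansion of a double contraction against a wedge-type combination. -/
lemma expand2_s19 (A B u w : Ix → ℝ) :
    ∑ n, ∑ m, A n * B m * ((1/2) * (u n * w m - u m * w n))
      = (1/2) * ((∑ n, A n * u n) * (∑ m, B m * w m)
          - (∑ m, B m * u m) * (∑ n, A n * w n)) := by
  simp only [Fin.sum_univ_four]; ring

/-- Expansion of a double contraction against the "g" combination. -/
lemma expand3 (A B u w : Ix → ℝ) (C : Ix → Ix → ℝ) :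
    ∑ n, ∑ m, A n * B m * (C n m - u n * w m + u m * w n)
      = (∑ n, ∑ m, A n * B m * C n m)
        - (∑ n, A n * u n) * (∑ m, B m * w m)
        + (∑ m, B m * u m) * (∑ n, A n * w n) := by
  simp only [Fin.sum_univ_four]; ring

/-- Key pointwise lemma: an antisymmetric bilinear form whose raised version
vanishes and which is orthogonal to a unit timelike vector must vanish. -/
lemma anti_raised_ker (t : Ix → ℝ) (h : Ix → Ix → ℝ) (g : Ix → Ix → ℝ) (ξ : Ix → ℝ)
    (hker : ∀ ω : Ix → ℝ, (∀ a, ∑ b, h a b * ω b = 0) ↔ ∃ c : ℝ, ω = c • t)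
    (hξ : ∑ n, t n * ξ n = 1)
    (hganti : ∀ a b, g a b = - g b a)
    (hξg : ∀ b, ∑ n, ξ n * g n b = 0)
    (hgz : ∀ a b, ∑ n, ∑ m, h a n * h b m * g n m = 0) :
    ∀ a b, g a b = 0 := by
  have S1 : ∀ b n, ∑ m, h b m * g n m = 0 := by
    intro b
    have hpre : ∀ a, ∑ n, h a n * (∑ m, h b m * g n m) = 0 := fun a => by
      calc ∑ n, h a n * ∑ m, h b m * g n m
          = ∑ n, ∑ m, h a n * h b m * g n m := Finset.sum_congr rfl fun n _ => by
            rw [Finset.mul_sum]; exact Finset.sum_congr rfl fun m _ => by ring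
        _ = 0 := hgz a b
    obtain ⟨c, hc⟩ := (hker _).mp hpre
    have hc' : ∀ n, (∑ m, h b m * g n m) = c * t n := fun n => by
      have := congrFun hc n; simpa using this
    have hc0 : c = 0 := by
      have h2 : ∑ n, ξ n * (∑ m, h b m * g n m) = c := by
        calc ∑ n, ξ n * (∑ m, h b m * g n m)
            = ∑ n, ξ n * (c * t n) := Finset.sum_congr rfl fun n _ => by rw [hc' n]
          _ = c * ∑ n, t n * ξ n := by
              rw [Finset.mul_sum]; exact Finset.sum_congr rfl fun n _ => by ring
          _ = c := by rw [hξ, mul_one]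
      have h3 : ∑ n, ξ n * (∑ m, h b m * g n m) = 0 := by
        calc ∑ n, ξ n * (∑ m, h b m * g n m)
            = ∑ m, h b m * (∑ n, ξ n * g n m) := by
              simp only [Finset.mul_sum]
              rw [Finset.sum_comm]
              exact Finset.sum_congr rfl fun m _ =>
                Finset.sum_congr rfl fun n _ => by ring
          _ = 0 := Finset.sum_eq_zero fun m _ => by rw [hξg m, mul_zero]
      rw [h3] at h2; exact h2.symm
    intro n; rw [hc' n, hc0, zero_mul]
  intro a b
  obtain ⟨c, hc⟩ := (hker fun m => g a m).mp (fun x => S1 x a)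
  have hc' : ∀ m, g a m = c * t m := fun m => by
    have := congrFun hc m; simpa using this
  have hc0 : c = 0 := by
    have h0 : ∑ n, ξ n * g n a = 0 := hξg a
    have h1 : ∑ n, ξ n * g n a = -c := by
      calc ∑ n, ξ n * g n a
          = ∑ n, ξ n * (-(c * t n)) := Finset.sum_congr rfl fun n _ => by
            rw [hganti n a, hc' n]
        _ = (-c) * ∑ n, t n * ξ n := by
            rw [Finset.mul_sum]; exact Finset.sum_congr rfl fun n _ => by ring
        _ = -c := by rw [hξ, mul_one]
    rw [h0] at h1; linarith
  rw [hc' b, hc0, zero_mul]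

/-- On a classical spacetime, for any antisymmetric two-form f_{ab},
the fully raised tensor f^{ab} = h^{an} h^{bm} f_{nm} vanishes iff
f_{ab} = t_[a φ_{b]} for some covector φ_a. -/
theorem raised_two_form_vanishes_iff_temporal (S : ClassicalSpacetime) (f : Ten2)
    (hfanti : ∀ p a b, f p a b = - f p b a) :
    (∀ p a b, ∑ n, ∑ m, S.h p a n * S.h p b m * f p n m = 0) ↔
      (∃ φ : Cov, ∀ p a b, f p a b = (1/2) * (S.t p a * φ p b - S.t p b * φ p a)) := by
  constructor
  · intro hz
    -- choose a unit timelike covector ξ at each point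
    have hex : ∀ p : Pt, ∃ v : Ix → ℝ, ∑ n, S.t p n * v n = 1 := by
      intro p
      obtain ⟨i, hi⟩ : ∃ i, S.t p i ≠ 0 := by
        by_contra hcon; push_neg at hcon; exact S.t_ne p (funext hcon)
      refine ⟨Pi.single i (S.t p i)⁻¹, ?_⟩
      rw [Finset.sum_eq_single i]
      · simp [mul_inv_cancel₀ hi]
      · intro b _ hb; simp [Pi.single_eq_of_ne hb]
      · intro hmem; exact absurd (Finset.mem_univ i) hmem
    choose ξ hξ using hex
    refine ⟨fun p b => 2 * ∑ n, ξ p n * f p n b, ?_⟩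
    intro p a b
    obtain ⟨ψ, hψdef⟩ : ∃ ψ : Ix → ℝ, ψ = fun x => ∑ k, ξ p k * f p k x := ⟨_, rfl⟩
    have hψ : ∀ x, ψ x = ∑ k, ξ p k * f p k x := fun x => by rw [hψdef]
    have hξt' : ∑ n, ξ p n * S.t p n = 1 := by
      rw [← hξ p]; exact Finset.sum_congr rfl fun n _ => mul_comm _ _
    have horth' : ∀ a, ∑ n, S.h p a n * S.t p n = 0 := fun a => by
      rw [← S.orth p a]
      exact Finset.sum_congr rfl fun n _ => by rw [S.h_symm p a n]; ring
    have hQ : ∑ n, ξ p n * ψ n = 0 := by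
      calc ∑ n, ξ p n * ψ n
          = ∑ n, ∑ m, ξ p n * ξ p m * f p m n := by
            refine Finset.sum_congr rfl fun n _ => ?_
            rw [hψ n, Finset.mul_sum]
            exact Finset.sum_congr rfl fun m _ => by ring
        _ = 0 := anti_quad (f p) (hfanti p) (ξ p)
    have key := anti_raised_ker (S.t p) (S.h p)
      (fun a b => f p a b - S.t p a * ψ b + S.t p b * ψ a) (ξ p)
      (S.h_ker p) (hξ p)
      (fun x y => by
        show f p x y - S.t p x * ψ y + S.t p y * ψ x
            = -(f p y x - S.t p y * ψ x + S.t p x * ψ y)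
        linear_combination hfanti p x y)
      (fun x => by
        show ∑ n, ξ p n * (f p n x - S.t p n * ψ x + S.t p x * ψ n) = 0
        rw [expand1, ← hψ x, hξt', hQ]; ring)
      (fun x y => by
        show ∑ n, ∑ m, S.h p x n * S.h p y m
            * (f p n m - S.t p n * ψ m + S.t p m * ψ n) = 0
        rw [expand3, hz p x y, horth' x, horth' y]; ring)
    have k : f p a b - S.t p a * ψ b + S.t p b * ψ a = 0 := key a b
    show f p a b = (1/2) * (S.t p a * (2 * ∑ n, ξ p n * f p n b)
        - S.t p b * (2 * ∑ n, ξ p n * f p n a))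
    rw [← hψ b, ← hψ a]
    linear_combination k
  · rintro ⟨φ, hφ⟩ p a b
    have horth' : ∀ a, ∑ n, S.h p a n * S.t p n = 0 := fun a => by
      rw [← S.orth p a]
      exact Finset.sum_congr rfl fun n _ => by rw [S.h_symm p a n]; ring
    calc ∑ n, ∑ m, S.h p a n * S.h p b m * f p n m
        = ∑ n, ∑ m, S.h p a n * S.h p b m
            * ((1/2) * (S.t p n * φ p m - S.t p m * φ p n)) :=
          Finset.sum_congr rfl fun n _ => Finset.sum_congr rfl fun m _ => by
            rw [hφ p n m]
      _ = 0 := by rw [expand2_s19, horth' a, horth' b]; ring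
end
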